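/- Let S ⊆ S_N be a subgroup satisfying the parity condition PC: for every subgroup T ⊆ S, dim (ℂ^N)^T ≡ N (mod 2). Then S ⊆ A_N, i.e., every element of S is an even permutation. -/

import Mathlib

/-- The linear action of a permutation `σ ∈ S_N` on `ℂ^N`. -/
noncomputable def permLin (N : ℕ) (σ : Equiv.Perm (Fin N)) :
    (Fin N → ℂ) →ₗ[ℂ] (Fin N → ℂ) :=
  Matrix.toLin' (σ.permMatrix ℂ)

/-- The fixed subspace `Fix(σ) = ker(σ − id)` of a permutation acting on `ℂ^N`. -/
noncomputable def fixSubmodule (N : ℕ) (σ : Equiv.Perm (Fin N)) :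
    Submodule ℂ (Fin N → ℂ) :=
  LinearMap.ker (permLin N σ - LinearMap.id)



lemma mem_fixSubmodule {N : ℕ} {σ : Equiv.Perm (Fin N)} {v : Fin N → ℂ} :
    v ∈ fixSubmodule N σ ↔ ∀ i, v (σ i) = v i := by
  simp [fixSubmodule, permLin, LinearMap.mem_ker, Matrix.toLin'_apply, funext_iff,
    sub_eq_zero, Matrix.mulVec, dotProduct, Equiv.Perm.permMatrix,
    PEquiv.toMatrix_apply, Equiv.toPEquiv_apply]

lemma fix_zpow {N : ℕ} {σ : Equiv.Perm (Fin N)} {v : Fin N → ℂ}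
    (h : ∀ i, v (σ i) = v i) : ∀ n : ℤ, ∀ i, v ((σ ^ n) i) = v i := by
  have hinv : ∀ i, v (σ⁻¹ i) = v i := fun i => by
    conv_rhs => rw [← (show σ (σ⁻¹ i) = i from Equiv.apply_symm_apply σ i), h]
  intro n
  induction n using Int.induction_on with
  | zero => simp
  | succ k ih => intro i; rw [add_comm, zpow_add, zpow_one, Equiv.Perm.mul_apply, h, ih]
  | pred k ih =>
      intro i
      rw [sub_eq_add_neg, add_comm, zpow_add, Equiv.Perm.mul_apply]
      rw [show (σ : Equiv.Perm (Fin N)) ^ (-1 : ℤ) = σ⁻¹ by simp, hinv, ih]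

lemma fix_sameCycle {N : ℕ} {σ : Equiv.Perm (Fin N)} {v : Fin N → ℂ}
    (h : ∀ i, v (σ i) = v i) {x y : Fin N} (hxy : σ.SameCycle x y) : v x = v y := by
  obtain ⟨n, rfl⟩ := hxy
  exact (fix_zpow h n x).symm

/-- The setoid of the `SameCycle` relation. -/
def scSetoid {N : ℕ} (σ : Equiv.Perm (Fin N)) : Setoid (Fin N) :=
  ⟨σ.SameCycle, ⟨Equiv.Perm.SameCycle.refl σ, Equiv.Perm.SameCycle.symm,
    Equiv.Perm.SameCycle.trans⟩⟩

noncomputable instance {N : ℕ} (σ : Equiv.Perm (Fin N)) :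
    Fintype (Quotient (scSetoid σ)) :=
  @Quotient.fintype _ _ (scSetoid σ) (fun x y => inferInstanceAs (Decidable (σ.SameCycle x y)))

noncomputable def fixEquiv (N : ℕ) (σ : Equiv.Perm (Fin N)) :
    (fixSubmodule N σ) ≃ₗ[ℂ] (Quotient (scSetoid σ) → ℂ) where
  toFun v := fun q => (v : Fin N → ℂ) q.out
  map_add' u v := rfl
  map_smul' c v := rfl
  invFun f := ⟨fun i => f (Quotient.mk _ i), by
    rw [mem_fixSubmodule]
    intro i
    congr 1
    exact Quotient.sound ((Equiv.Perm.sameCycle_apply_right (f := σ)).mpr (Equiv.Perm.SameCycle.refl σ i)).symm⟩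
  left_inv v := by
    ext i
    exact fix_sameCycle (mem_fixSubmodule.mp v.2)
      (Quotient.exact (Quotient.out_eq (Quotient.mk (scSetoid σ) i)))
  right_inv f := by
    ext q
    simp [Quotient.out_eq]


noncomputable def orbitFn {N : ℕ} (σ : Equiv.Perm (Fin N)) :
    Quotient (scSetoid σ) → ({x : Fin N // σ x = x} ⊕ {c // c ∈ σ.cycleFactorsFinset}) :=
  Quotient.lift (fun x =>
      if h : σ x = x then Sum.inl ⟨x, h⟩
      else Sum.inr ⟨σ.cycleOf x, Equiv.Perm.cycleOf_mem_cycleFactorsFinset_iff.mpr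
        (Equiv.Perm.mem_support.mpr h)⟩) (by
    intro a b hab
    have hab' : σ.SameCycle a b := hab
    by_cases h : σ a = a
    · obtain rfl := hab'.eq_of_left h
      rfl
    · have h2 : ¬ σ b = b := fun hc => h ((hab'.apply_eq_self_iff).mpr hc)
      simp only [h, h2, dif_neg, not_false_iff]
      exact congrArg Sum.inr (Subtype.ext hab'.cycleOf_eq))

lemma orbitFn_mk {N : ℕ} (σ : Equiv.Perm (Fin N)) (x : Fin N) :
    orbitFn σ (Quotient.mk _ x) =
      if h : σ x = x then Sum.inl ⟨x, h⟩
      else Sum.inr ⟨σ.cycleOf x, Equiv.Perm.cycleOf_mem_cycleFactorsFinset_iff.mpr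
        (Equiv.Perm.mem_support.mpr h)⟩ := rfl

lemma orbitFn_bij {N : ℕ} (σ : Equiv.Perm (Fin N)) : Function.Bijective (orbitFn σ) := by
  constructor
  · rintro ⟨a⟩ ⟨b⟩ hab
    rw [show Quot.mk _ a = Quotient.mk (scSetoid σ) a from rfl,
      show Quot.mk _ b = Quotient.mk (scSetoid σ) b from rfl,
      orbitFn_mk, orbitFn_mk] at hab
    by_cases ha : σ a = a <;> by_cases hb : σ b = b <;>
      simp only [ha, hb, dif_pos, dif_neg, not_false_iff] at hab
    · obtain rfl : a = b := by simpa using hab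
      rfl
    · exact absurd hab (by simp)
    · exact absurd hab (by simp)
    · apply Quotient.sound
      have hcy : σ.cycleOf a = σ.cycleOf b := by simpa using hab
      show σ.SameCycle a b
      have hb' : b ∈ (σ.cycleOf b).support :=
        Equiv.Perm.mem_support_cycleOf_iff.mpr ⟨Equiv.Perm.SameCycle.refl σ b,
          Equiv.Perm.mem_support.mpr hb⟩
      rw [← hcy] at hb'
      exact (Equiv.Perm.mem_support_cycleOf_iff.mp hb').1
  · rintro (⟨x, hx⟩ | ⟨c, hc⟩)
    · exact ⟨Quotient.mk _ x, by rw [orbitFn_mk]; simp [hx]⟩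
    · have hc1 : c.IsCycle := (Equiv.Perm.mem_cycleFactorsFinset_iff.mp hc).1
      obtain ⟨x, hx⟩ := hc1.nonempty_support
      have hcx : c = σ.cycleOf x := Equiv.Perm.cycle_is_cycleOf hx hc
      have hxs : x ∈ σ.support := Equiv.Perm.mem_cycleFactorsFinset_support_le hc hx
      refine ⟨Quotient.mk _ x, ?_⟩
      rw [orbitFn_mk]
      simp only [Equiv.Perm.mem_support.mp hxs, dif_neg, not_false_iff]
      exact congrArg Sum.inr (Subtype.ext hcx.symm)

lemma finrank_fixSubmodule (N : ℕ) (σ : Equiv.Perm (Fin N)) :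
    Module.finrank ℂ (fixSubmodule N σ) =
      (N - σ.support.card) + Multiset.card σ.cycleType := by
  rw [(fixEquiv N σ).finrank_eq, Module.finrank_fintype_fun_eq_card,
    Fintype.card_congr (Equiv.ofBijective _ (orbitFn_bij σ)), Fintype.card_sum,
    Fintype.card_coe]
  congr 1
  · have h1 : Fintype.card {x : Fin N // ¬ σ x = x} = σ.support.card := by
      rw [Fintype.card_subtype]
      congr 1
    have h2 := Fintype.card_subtype_compl (fun x : Fin N => σ x = x)
    rw [h1, Fintype.card_fin] at h2
    have h3 : Fintype.card {x : Fin N // σ x = x} ≤ N := by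
      have := Fintype.card_subtype_le (fun x : Fin N => σ x = x)
      simpa using this
    have h4 : σ.support.card ≤ N := by
      have := Finset.card_le_univ σ.support
      simpa using this
    omega
  · simp [Equiv.Perm.cycleType]


/-- If a subgroup `S ⊆ S_N` satisfies the parity condition PC
(`dim (ℂ^N)^T ≡ N (mod 2)` for every subgroup `T ⊆ S`), then `S ⊆ A_N`. -/
theorem PC_implies_alternating (N : ℕ) (S : Subgroup (Equiv.Perm (Fin N)))
    (hPC : ∀ T : Subgroup (Equiv.Perm (Fin N)), T ≤ S →
      Module.finrank ℂ ↥(⨅ g ∈ T, fixSubmodule N g) % 2 = N % 2) :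
    S ≤ alternatingGroup (Fin N) := by

  intro σ hσ
  have hT : Subgroup.zpowers σ ≤ S := Subgroup.zpowers_le.mpr hσ
  have key : (⨅ g ∈ Subgroup.zpowers σ, fixSubmodule N g) = fixSubmodule N σ := by
    apply le_antisymm
    · exact biInf_le _ (Subgroup.mem_zpowers σ)
    · refine le_iInf₂ fun g hg => ?_
      obtain ⟨n, rfl⟩ := hg
      intro v hv
      exact mem_fixSubmodule.mpr fun i => fix_zpow (mem_fixSubmodule.mp hv) n i
  have h := hPC (Subgroup.zpowers σ) hT
  rw [key, finrank_fixSubmodule] at h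
  have hsle : σ.support.card ≤ N := by
    have := Finset.card_le_univ σ.support
    simpa using this
  have heven : Even (σ.cycleType.sum + Multiset.card σ.cycleType) := by
    rw [σ.sum_cycleType, Nat.even_iff]
    omega
  rw [Equiv.Perm.mem_alternatingGroup, Equiv.Perm.sign_of_cycleType]
  exact heven.neg_one_pow
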